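/- arXiv:2504.04049 — 2 statements merged into one kernel-verified Lean document; each statement's English description precedes it below -/
import Mathlib

section
/- Let f_1,…,f_ℓ with ℓ-th root h (h^ℓ = f_1⋯f_ℓ) and F_1,…,F_ℓ with ℓ-th root H (H^ℓ = F_1⋯F_ℓ) be as in the context, and let q_i ∈ K[[t]] satisfy f_i = q_i·h for i = 1,…,ℓ. Then the matrix product of the derivative arrays (h′; f_1,…,f_ℓ) and (H′; F_1,…,F_ℓ) (where ′ denotes formal derivative) equals the multiple Riordan array ( (H(h))′; q_1·F_1(h), …, q_ℓ·F_ℓ(h) ), and moreover (q_1 F_1(h))·(q_2 F_2(h))⋯(q_ℓ F_ℓ(h)) = (H(h))^ℓ. Hence the product of two derivative arrays is again a derivative array (the derivative arrays form a subgroup of the multiple Riordan group). -/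
/-! Substitution `G ↦ G(h)` is a ring homomorphism obeying the chain rule, and
`∑_j [t^j]G · [t^n](B h^j) = [t^n](B · G(h))`. Writing `f_i = q_i h`, the relation
`h^ℓ = ∏ f_i` forces `∏ q_i = 1`, so the `j`-th column of `(h′; f)` is `h′ q_1⋯q_m · h^j` with
`m = j mod ℓ`. The `k`-th column `G` of `(H′; F)` only has terms of degree `≡ k (mod ℓ)`, so
only `j ≡ k` contributes and the `k`-th column of the product is `h′ q_1⋯q_m · G(h)`, which the
chain rule rewrites as the `k`-th column of `((H(h))′; q_i F_i(h))`. -/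

open PowerSeries Finset

/-- Formal substitution `F(u)`: for `u` with zero constant term, the `n`-th coefficient of
`F(u)` is `∑_{k ≤ n} F_k · [t^n] u^k`. -/
noncomputable def psComp {K : Type*} [CommRing K] (F u : K⟦X⟧) : K⟦X⟧ :=
  PowerSeries.mk fun n => ∑ k ∈ Finset.range (n + 1), coeff k F * coeff n (u ^ k)

/-- Entry `d_{n,k}` of the multiple Riordan array `(g; f_0, …, f_{ℓ-1})`: the `k`-th column,
`k = qℓ + m`, has generating function `g · f_0⋯f_{m-1} · (f_0⋯f_{ℓ-1})^q`. -/
noncomputable def mrEntry {K : Type*} [CommRing K] (ℓ : ℕ) (g : K⟦X⟧) (f : ℕ → K⟦X⟧)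
    (n k : ℕ) : K :=
  coeff n (g * (∏ i ∈ Finset.range (k % ℓ), f i) * (∏ i ∈ Finset.range ℓ, f i) ^ (k / ℓ))

section Substitution

variable {R : Type*} [CommRing R] {u : R⟦X⟧}

theorem coeff_pow_eq_zero_of_lt (hu : constantCoeff u = 0) {m j : ℕ} (hmj : m < j) :
    coeff m (u ^ j) = 0 :=
  coeff_of_lt_order _ <|
    (Nat.cast_lt.mpr hmj).trans_le (le_order_pow_of_constantCoeff_eq_zero j hu)

theorem coeff_subst_eq_sum_range (hu : constantCoeff u = 0) (G : R⟦X⟧) {m n : ℕ} (hmn : m ≤ n) :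
    coeff m (G.subst u) = ∑ j ∈ range (n + 1), coeff j G * coeff m (u ^ j) := by
  rw [coeff_subst' (.of_constantCoeff_zero' hu)]
  refine finsum_eq_sum_of_support_subset _ fun j hj => mem_range.mpr ?_
  by_contra hjn
  exact (Function.mem_support.mp hj) (by rw [coeff_pow_eq_zero_of_lt hu (by omega), smul_zero])

theorem psComp_eq_subst (hu : constantCoeff u = 0) (G : R⟦X⟧) : psComp G u = G.subst u := by
  ext n
  rw [coeff_subst_eq_sum_range hu G le_rfl, psComp, coeff_mk]

theorem coeff_mul_subst (hu : constantCoeff u = 0) (A G : R⟦X⟧) (n : ℕ) :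
    coeff n (A * G.subst u) = ∑ j ∈ range (n + 1), coeff j G * coeff n (A * u ^ j) := by
  simp only [coeff_mul, mul_sum]
  rw [sum_comm]
  refine sum_congr rfl fun p hp => ?_
  rw [coeff_subst_eq_sum_range (n := n) hu G (by have := mem_antidiagonal.mp hp; omega), mul_sum]
  exact sum_congr rfl fun j _ => by ring

end Substitution

section MultipleRiordanColumn

variable {M : Type*} [CommMonoid M] (ℓ : ℕ)

def mrColumn (g : M) (f : ℕ → M) (k : ℕ) : M :=
  g * (∏ i ∈ range (k % ℓ), f i) * (∏ i ∈ range ℓ, f i) ^ (k / ℓ)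

theorem mrEntry_eq_coeff_mrColumn {R : Type*} [CommRing R] (g : R⟦X⟧) (f : ℕ → R⟦X⟧)
    (n k : ℕ) :
    mrEntry ℓ g f n k = coeff n (mrColumn ℓ g f k) :=
  rfl

variable {ℓ}

theorem mrColumn_congr (hℓ : 0 < ℓ) (g : M) {f f' : ℕ → M} (hff' : ∀ i < ℓ, f i = f' i)
    (k : ℕ) : mrColumn ℓ g f k = mrColumn ℓ g f' k := by
  have hk : k % ℓ < ℓ := Nat.mod_lt k hℓ
  unfold mrColumn
  rw [prod_congr rfl fun i hi => hff' i (mem_range.mp hi),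
    prod_congr rfl fun i hi => hff' i ((mem_range.mp hi).trans hk)]

theorem mrColumn_mul (g₁ g₂ : M) (f₁ f₂ : ℕ → M) (k : ℕ) :
    mrColumn ℓ (g₁ * g₂) (fun i => f₁ i * f₂ i) k = mrColumn ℓ g₁ f₁ k * mrColumn ℓ g₂ f₂ k := by
  simp only [mrColumn, prod_mul_distrib, mul_pow]
  ac_rfl

theorem mrColumn_one_const (u : M) (k : ℕ) : mrColumn ℓ 1 (fun _ => u) k = u ^ k := by
  simp only [mrColumn, prod_const, card_range, one_mul, ← pow_mul, ← pow_add, Nat.mod_add_div]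

theorem map_mrColumn {N F : Type*} [CommMonoid N] [FunLike F M N] [MonoidHomClass F M N] (φ : F)
    (g : M) (f : ℕ → M) (k : ℕ) :
    φ (mrColumn ℓ g f k) = mrColumn ℓ (φ g) (fun i => φ (f i)) k := by
  simp only [mrColumn, map_mul, map_pow, map_prod]

theorem mrColumn_eq_mul_pow (hℓ : 0 < ℓ) (g : M) {f q : ℕ → M} {u : M}
    (hf : ∀ i < ℓ, f i = q i * u) (k : ℕ) : mrColumn ℓ g f k = mrColumn ℓ g q k * u ^ k := by
  rw [mrColumn_congr hℓ g hf, ← mrColumn_one_const (ℓ := ℓ) u, ← mrColumn_mul, mul_one]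

theorem mrColumn_eq_of_prod_eq_one {f : ℕ → M} (hf : ∏ i ∈ range ℓ, f i = 1) (g : M)
    {j k : ℕ} (hjk : j % ℓ = k % ℓ) : mrColumn ℓ g f j = mrColumn ℓ g f k := by
  simp only [mrColumn, hf, one_pow, hjk]

end MultipleRiordanColumn

theorem prod_eq_one_of_pow_eq_prod_mul {R : Type*} [CommRing R] [IsDomain R] {ℓ : ℕ}
    {f q : ℕ → R} {u : R} (hu : u ≠ 0) (hf : ∀ i < ℓ, f i = q i * u)
    (hfu : u ^ ℓ = ∏ i ∈ range ℓ, f i) : ∏ i ∈ range ℓ, q i = 1 := by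
  rw [prod_congr rfl fun i hi => hf i (mem_range.mp hi), prod_mul_distrib, prod_const,
    card_range] at hfu
  exact (mul_eq_right₀ (pow_ne_zero ℓ hu)).mp hfu.symm

section SupportedMod

variable {R : Type*} [CommRing R]

def SupportedMod (ℓ : ℕ) (r : ZMod ℓ) (A : R⟦X⟧) : Prop :=
  ∀ n : ℕ, (n : ZMod ℓ) ≠ r → coeff n A = 0

variable {ℓ : ℕ}

theorem supportedMod_one_of_mod_ne_one {A : R⟦X⟧}
    (hA : ∀ n, n % ℓ ≠ 1 → coeff n A = 0) : SupportedMod ℓ 1 A := by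
  intro n hn
  refine hA n fun h => hn ?_
  rw [← ZMod.natCast_mod, h, Nat.cast_one]

theorem supportedMod_one : SupportedMod ℓ 0 (1 : R⟦X⟧) := by
  intro n hn
  rw [coeff_one, if_neg]
  rintro rfl
  exact hn Nat.cast_zero

namespace SupportedMod

variable {r s : ZMod ℓ} {A B : R⟦X⟧}

theorem mul (hA : SupportedMod ℓ r A) (hB : SupportedMod ℓ s B) :
    SupportedMod ℓ (r + s) (A * B) := by
  intro n hn
  rw [coeff_mul]
  refine sum_eq_zero fun p hp => ?_
  by_cases hp1 : (p.1 : ZMod ℓ) = r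
  · by_cases hp2 : (p.2 : ZMod ℓ) = s
    · exact absurd (by rw [← mem_antidiagonal.mp hp, Nat.cast_add, hp1, hp2]) hn
    · rw [hB _ hp2, mul_zero]
  · rw [hA _ hp1, zero_mul]

theorem prod {ι : Type*} {t : Finset ι} {r : ι → ZMod ℓ} {A : ι → R⟦X⟧}
    (hA : ∀ i ∈ t, SupportedMod ℓ (r i) (A i)) :
    SupportedMod ℓ (∑ i ∈ t, r i) (∏ i ∈ t, A i) := by
  classical
  induction t using Finset.induction_on with
  | empty => simpa using supportedMod_one
  | insert i t hi ih =>
    rw [sum_insert hi, prod_insert hi]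
    exact (hA i (mem_insert_self i t)).mul (ih fun j hj => hA j (mem_insert_of_mem hj))

theorem pow (hA : SupportedMod ℓ r A) (m : ℕ) : SupportedMod ℓ (m * r) (A ^ m) := by
  simpa using prod (t := range m) fun _ _ => hA

theorem derivative (hA : SupportedMod ℓ (r + 1) A) : SupportedMod ℓ r (d⁄dX R A) := by
  intro n hn
  rw [coeff_derivative, hA (n + 1) (by rwa [Nat.cast_succ, Ne, add_left_inj]), zero_mul]

theorem mrColumn (hℓ : 0 < ℓ) (hA : SupportedMod ℓ r A) {f : ℕ → R⟦X⟧}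
    (hf : ∀ i < ℓ, SupportedMod ℓ 1 (f i)) (k : ℕ) :
    SupportedMod ℓ (r + k) (mrColumn ℓ A f k) := by
  have hk : k % ℓ < ℓ := Nat.mod_lt k hℓ
  unfold _root_.mrColumn
  have hcols := (hA.mul (prod fun i hi => hf i ((mem_range.mp hi).trans hk))).mul
    ((prod fun i hi => hf i (mem_range.mp hi)).pow (k / ℓ))
  simpa [ZMod.natCast_self, ZMod.natCast_mod] using hcols

end SupportedMod

end SupportedMod

theorem stmt4_general {K : Type*} [Field K] (ℓ : ℕ) (hℓ : 2 ≤ ℓ)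
    (f F : ℕ → K⟦X⟧)
    (hF : ∀ i < ℓ, ∀ n, n % ℓ ≠ 1 → coeff n (F i) = 0)
    (h : K⟦X⟧) (hhs : ∀ n, n % ℓ ≠ 1 → coeff n h = 0) (hh1 : coeff 1 h ≠ 0)
    (hhl : h ^ ℓ = ∏ i ∈ Finset.range ℓ, f i)
    (H : K⟦X⟧) (hHs : ∀ n, n % ℓ ≠ 1 → coeff n H = 0)
    (hHl : H ^ ℓ = ∏ i ∈ Finset.range ℓ, F i)
    (q : ℕ → K⟦X⟧) (hq : ∀ i < ℓ, f i = q i * h)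
    (d e : ℕ → ℕ → K)
    (hd : ∀ n k, d n k = mrEntry ℓ (PowerSeries.derivativeFun h) f n k)
    (he : ∀ n k, e n k = mrEntry ℓ (PowerSeries.derivativeFun H) F n k) :
    (∀ n k, ∑ j ∈ Finset.range (n + 1), d n j * e j k
      = mrEntry ℓ (PowerSeries.derivativeFun (psComp H h))
          (fun i => q i * psComp (F i) h) n k) ∧
    ∏ i ∈ Finset.range ℓ, (q i * psComp (F i) h) = (psComp H h) ^ ℓ := by
  have hℓ0 : 0 < ℓ := by omega
  have h0 : constantCoeff h = 0 := by simpa using hhs 0 (by simp)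
  have ha : HasSubst h := .of_constantCoeff_zero' h0
  have hQ : ∏ i ∈ range ℓ, q i = 1 :=
    prod_eq_one_of_pow_eq_prod_mul (fun hz => hh1 (by rw [hz, map_zero])) hq hhl
  have hder : ∀ g : K⟦X⟧, derivativeFun g = d⁄dX K g := fun _ => rfl
  simp only [psComp_eq_subst h0, hder, mrEntry_eq_coeff_mrColumn] at hd he ⊢
  refine ⟨fun n k => ?_, ?_⟩
  · set G := mrColumn ℓ (d⁄dX K H) F k
    have hG : SupportedMod ℓ k G := by
      have hH' : SupportedMod ℓ 0 (d⁄dX K H) :=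
        SupportedMod.derivative (by simpa using supportedMod_one_of_mod_ne_one hHs)
      simpa using hH'.mrColumn hℓ0 (fun i hi => supportedMod_one_of_mod_ne_one (hF i hi)) k
    calc ∑ j ∈ range (n + 1), d n j * e j k
        = ∑ j ∈ range (n + 1), coeff j G * coeff n (mrColumn ℓ (d⁄dX K h) q k * h ^ j) := by
          refine sum_congr rfl fun j _ => ?_
          by_cases hj : (j : ZMod ℓ) = k
          · rw [hd, he, mrColumn_eq_mul_pow hℓ0 _ hq, mrColumn_eq_of_prod_eq_one hQ _
              ((ZMod.natCast_eq_natCast_iff' j k ℓ).mp hj), mul_comm]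
          · rw [he, hG j hj, mul_zero, zero_mul]
      _ = coeff n (mrColumn ℓ (d⁄dX K h) q k * G.subst h) := (coeff_mul_subst h0 _ _ n).symm
      _ = _ := by
          rw [derivative_subst ha, mul_comm _ (d⁄dX K h), mrColumn_mul, ← coe_substAlgHom ha,
            map_mrColumn]
  · rw [prod_mul_distrib, hQ, one_mul, ← subst_pow ha, hHl, ← coe_substAlgHom ha, map_prod]

/-- The product of two derivative arrays is a derivative array: the derivative arrays form
a subgroup of the multiple Riordan group. -/
theorem stmt4 {K : Type*} [Field K] [CharZero K] (ℓ : ℕ) (hℓ : 2 ≤ ℓ)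
    (f F : ℕ → K⟦X⟧)
    (hf : ∀ i < ℓ, ∀ n, n % ℓ ≠ 1 → coeff n (f i) = 0)
    (hf1 : ∀ i < ℓ, coeff 1 (f i) ≠ 0)
    (hF : ∀ i < ℓ, ∀ n, n % ℓ ≠ 1 → coeff n (F i) = 0)
    (hF1 : ∀ i < ℓ, coeff 1 (F i) ≠ 0)
    (h : K⟦X⟧) (hhs : ∀ n, n % ℓ ≠ 1 → coeff n h = 0) (hh1 : coeff 1 h ≠ 0)
    (hhl : h ^ ℓ = ∏ i ∈ Finset.range ℓ, f i)
    (H : K⟦X⟧) (hHs : ∀ n, n % ℓ ≠ 1 → coeff n H = 0) (hH1 : coeff 1 H ≠ 0)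
    (hHl : H ^ ℓ = ∏ i ∈ Finset.range ℓ, F i)
    (q : ℕ → K⟦X⟧) (hq : ∀ i < ℓ, f i = q i * h)
    (d e : ℕ → ℕ → K)
    (hd : ∀ n k, d n k = mrEntry ℓ (PowerSeries.derivativeFun h) f n k)
    (he : ∀ n k, e n k = mrEntry ℓ (PowerSeries.derivativeFun H) F n k) :
    (∀ n k, ∑ j ∈ Finset.range (n + 1), d n j * e j k
      = mrEntry ℓ (PowerSeries.derivativeFun (psComp H h))
          (fun i => q i * psComp (F i) h) n k) ∧
    ∏ i ∈ Finset.range ℓ, (q i * psComp (F i) h) = (psComp H h) ^ ℓ :=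
  stmt4_general ℓ hℓ f F hF h hhs hh1 hhl H hHs hHl q hq d e hd he
end

section
/- Let (d_{n,k}) = (g, f) be a Riordan type array. There exists a unique Z = Σ_{j≥0} z_j t^j ∈ K[[t]] such that g·(1 − t·Z(t·f)) = g(0) (equivalently g = d_{0,0}/(1 − t·Z(tf))). For this Z-sequence (z_j), one has d_{n,0} = Σ_{j=0}^{n−1} z_j d_{n−j−1, j} for all n ≥ 1. -/
/-! The defining equation says `X · Z(X f) = 1 - g(0)/g`. Substituting `X f` is a lower
triangular operator on coefficient sequences, `[t^n] Z(X f) = ∑_{k ≤ n} z_k [t^{n-k}] f^k`, whose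
diagonal entries `f(0)^k` are nonzero; so `Z` exists and is unique. Comparing coefficients of
`t^{n+1}` in `g = g(0) + X g Z(X f)` gives the recurrence. -/

open PowerSeries Finset

section TriangularSystem

variable {K : Type*} [Field K]

noncomputable def forwardSubst (c : ℕ → ℕ → K) (b : ℕ → K) : ℕ → K
  | n => (b n - ∑ k ∈ (range n).attach, forwardSubst c b k * c n k) / c n n
  termination_by n => n
  decreasing_by exact mem_range.mp k.2

theorem sum_forwardSubst_mul {c : ℕ → ℕ → K} (b : ℕ → K) (hc : ∀ n, c n n ≠ 0) (n : ℕ) :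
    ∑ k ∈ range (n + 1), forwardSubst c b k * c n k = b n := by
  rw [sum_range_succ]
  conv_lhs => rw [forwardSubst]
  rw [sum_attach (range n) (fun k => forwardSubst c b k * c n k), div_mul_cancel₀ _ (hc n)]
  ring

theorem existsUnique_lowerTriangular {c : ℕ → ℕ → K} (b : ℕ → K) (hc : ∀ n, c n n ≠ 0) :
    ∃! Z : K⟦X⟧, ∀ n, ∑ k ∈ range (n + 1), coeff k Z * c n k = b n := by
  refine ⟨mk (forwardSubst c b), by simpa using sum_forwardSubst_mul b hc, fun Z hZ => ?_⟩
  ext n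
  induction n using Nat.strong_induction_on with
  | _ n ih =>
    have hn := (hZ n).trans (sum_forwardSubst_mul b hc n).symm
    rw [sum_range_succ, sum_range_succ,
      sum_congr rfl fun k hk => by rw [ih k (mem_range.mp hk)]] at hn
    simpa [hc n] using hn

end TriangularSystem

section Substitution

variable {R : Type*} [CommRing R]

theorem coeff_pow_of_lt {u : R⟦X⟧} (hu : constantCoeff u = 0) {j k : ℕ} (h : j < k) :
    coeff j (u ^ k) = 0 :=
  X_pow_dvd_iff.mp (pow_dvd_pow_of_dvd (X_dvd_iff.mpr hu) k) j h

theorem coeff_mul_psComp (h Z : R⟦X⟧) {u : R⟦X⟧} (hu : constantCoeff u = 0) (n : ℕ) :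
    coeff n (h * psComp Z u) = ∑ k ∈ range (n + 1), coeff k Z * coeff n (h * u ^ k) := by
  have truncate : ∀ p ∈ antidiagonal n, coeff p.1 h * coeff p.2 (psComp Z u)
      = ∑ k ∈ range (n + 1), coeff k Z * (coeff p.1 h * coeff p.2 (u ^ k)) := by
    intro p hp
    have hp2 : p.2 + 1 ≤ n + 1 := by rw [HasAntidiagonal.mem_antidiagonal] at hp; omega
    rw [psComp, coeff_mk, mul_sum, ← sum_subset (range_subset_range.mpr hp2)]
    · exact sum_congr rfl fun k _ => by ring
    · intro k _ hk
      rw [coeff_pow_of_lt hu (by simpa using hk), mul_zero, mul_zero]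
  rw [coeff_mul, sum_congr rfl truncate, sum_comm]
  exact sum_congr rfl fun k _ => by rw [coeff_mul, mul_sum]

theorem coeff_mul_psComp_X_mul (h Z f : R⟦X⟧) (n : ℕ) :
    coeff n (h * psComp Z (X * f))
      = ∑ k ∈ range (n + 1), coeff k Z * coeff (n - k) (h * f ^ k) := by
  rw [coeff_mul_psComp h Z (by simp)]
  refine sum_congr rfl fun k hk => ?_
  rw [mul_pow, mul_left_comm, coeff_X_pow_mul', if_pos (Nat.lt_succ_iff.mp (mem_range.mp hk))]

theorem coeff_psComp_X_mul (Z f : R⟦X⟧) (n : ℕ) :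
    coeff n (psComp Z (X * f)) = ∑ k ∈ range (n + 1), coeff k Z * coeff (n - k) (f ^ k) := by
  simpa using coeff_mul_psComp_X_mul 1 Z f n

theorem coeff_succ_eq_of_zSequence {g f Z : R⟦X⟧}
    (hZ : g * (1 - X * psComp Z (X * f)) = C (constantCoeff g)) (n : ℕ) :
    coeff (n + 1) g = ∑ j ∈ range (n + 1), coeff j Z * coeff (n - j) (g * f ^ j) := by
  have h := congrArg (coeff (n + 1)) hZ
  rw [mul_sub, mul_one, mul_left_comm, map_sub, coeff_succ_X_mul, coeff_C,
    if_neg n.succ_ne_zero, sub_eq_zero] at h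
  rw [h, coeff_mul_psComp_X_mul]

end Substitution

section ZSequence

variable {K : Type*} [Field K]

theorem existsUnique_psComp_X_mul_eq {f : K⟦X⟧} (hf0 : constantCoeff f ≠ 0) (W : K⟦X⟧) :
    ∃! Z : K⟦X⟧, psComp Z (X * f) = W := by
  have hdiag : ∀ n, coeff (n - n) (f ^ n) ≠ 0 := by simp [hf0]
  simp_rw [PowerSeries.ext_iff, coeff_psComp_X_mul]
  exact existsUnique_lowerTriangular _ hdiag

theorem mul_one_sub_X_mul_eq_C_iff {g : K⟦X⟧} (hg0 : constantCoeff g ≠ 0) (P : K⟦X⟧) :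
    g * (1 - X * P) = C (constantCoeff g) ↔ X * P = 1 - C (constantCoeff g) * g⁻¹ := by
  have hg : g * g⁻¹ = 1 := PowerSeries.mul_inv_cancel g hg0
  constructor
  · intro h
    linear_combination (-g⁻¹) * h + (1 - X * P) * hg
  · intro h
    rw [h]
    linear_combination C (constantCoeff g) * hg

end ZSequence

theorem stmt7_general {K : Type*} [Field K]
    (g f : K⟦X⟧) (hg0 : constantCoeff g ≠ 0) (hf0 : constantCoeff f ≠ 0)
    (d : ℕ → ℕ → K) (hd : ∀ n k, d n k = coeff n (g * f ^ k)) :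
    (∃! Z : K⟦X⟧, g * (1 - X * psComp Z (X * f)) = C (constantCoeff g)) ∧
    ∀ Z : K⟦X⟧, g * (1 - X * psComp Z (X * f)) = C (constantCoeff g) →
      ∀ n, 1 ≤ n →
        d n 0 = ∑ j ∈ Finset.range n, coeff j Z * d (n - j - 1) j := by
  refine ⟨?_, fun Z hZ n hn => ?_⟩
  · obtain ⟨W, hW⟩ := X_dvd_iff.mpr (show constantCoeff (1 - C (constantCoeff g) * g⁻¹) = 0 by
      simp [hg0])
    simp_rw [mul_one_sub_X_mul_eq_C_iff hg0, hW, mul_right_inj' X_ne_zero]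
    exact existsUnique_psComp_X_mul_eq hf0 W
  · obtain ⟨m, rfl⟩ := Nat.exists_eq_add_of_le' hn
    rw [hd, pow_zero, mul_one, coeff_succ_eq_of_zSequence hZ]
    refine sum_congr rfl fun j _ => ?_
    rw [hd, Nat.sub_right_comm, Nat.add_sub_cancel]

/-- Existence and uniqueness of the `Z`-sequence of a Riordan type array `(g, f)`
(entries `d_{n,k} = [t^n] g f^k`), and the recurrence it induces. -/
theorem stmt7 {K : Type*} [Field K] [CharZero K]
    (g f : K⟦X⟧) (hg0 : constantCoeff g ≠ 0) (hf0 : constantCoeff f ≠ 0)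
    (d : ℕ → ℕ → K) (hd : ∀ n k, d n k = coeff n (g * f ^ k)) :
    (∃! Z : K⟦X⟧, g * (1 - X * psComp Z (X * f)) = C (constantCoeff g)) ∧
    ∀ Z : K⟦X⟧, g * (1 - X * psComp Z (X * f)) = C (constantCoeff g) →
      ∀ n, 1 ≤ n →
        d n 0 = ∑ j ∈ Finset.range n, coeff j Z * d (n - j - 1) j :=
  stmt7_general g f hg0 hf0 d hd
end
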